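/- Let L have weights (2,2,2,q) with q ≥ 2, s := x_1+x_2+x_3+x_4 and δ := (q−2)x_4. The upsets of L restricted to the interval [s, s+δ] are exactly the sets [s + m x_4, s + (q−2)x_4] for 0 ≤ m ≤ q−2 together with the empty set. -/

import Mathlib

/-- The subgroup of relations `p i • x_i - c` in the free abelian group on `x_1,…,x_n,c`. -/
def Lrel (n : ℕ) (p : Fin n → ℤ) : AddSubgroup ((Fin n → ℤ) × ℤ) :=
  AddSubgroup.closure {v | ∃ i : Fin n, v = (Pi.single i (p i), -1)}

/-- The Geigle-Lenzing group `L = ⟨x_1,…,x_n,c⟩ / ⟨p_i x_i - c⟩`. -/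
abbrev Lgrp (n : ℕ) (p : Fin n → ℤ) : Type :=
  ((Fin n → ℤ) × ℤ) ⧸ Lrel n p

/-- The generator `x_i` of `L`. -/
def Lx (n : ℕ) (p : Fin n → ℤ) (i : Fin n) : Lgrp n p :=
  QuotientAddGroup.mk (Pi.single i 1, 0)

/-- The canonical element `c` of `L`. -/
def Lc (n : ℕ) (p : Fin n → ℤ) : Lgrp n p :=
  QuotientAddGroup.mk (0, 1)

/-- The positive cone `L_+`, the submonoid generated by `x_1,…,x_n,c`. -/
def Lplus (n : ℕ) (p : Fin n → ℤ) : AddSubmonoid (Lgrp n p) :=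
  AddSubmonoid.closure (Set.range (Lx n p) ∪ {Lc n p})

namespace Stmt7

variable (q : ℤ)

/-- The weight sequence `(2,2,2,q)`. -/
def w : Fin 4 → ℤ := ![2, 2, 2, q]

/-- `s = x_1 + x_2 + x_3 + x_4`. -/
def s : Lgrp 4 (w q) := ∑ i, Lx 4 (w q) i

/-- The partial order on `L`: `a ≤ b` iff `b − a ∈ L_+`. -/
def le (a b : Lgrp 4 (w q)) : Prop := b - a ∈ Lplus 4 (w q)

/-- The interval `[a, b]` in `L`. -/
def Icc (a b : Lgrp 4 (w q)) : Set (Lgrp 4 (w q)) := {z | le q a z ∧ le q z b}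

/-- `J` is an upset of `L` restricted to `I`: `J ⊆ I` and `(J + L_+) ∩ I ⊆ J`. -/
def IsUpsetIn (I J : Set (Lgrp 4 (w q))) : Prop :=
  J ⊆ I ∧ ∀ a ∈ J, ∀ u ∈ Lplus 4 (w q), a + u ∈ I → a + u ∈ J

-- auxiliary
def phiF : (Fin 4 → ℤ) × ℤ →+ ZMod 2 × ZMod 2 × ZMod 2 × ℤ where
  toFun v := ((v.1 0 : ZMod 2), (v.1 1 : ZMod 2), (v.1 2 : ZMod 2),
    q*(v.1 0 + v.1 1 + v.1 2) + 2*v.1 3 + 2*q*v.2)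
  map_zero' := by simp
  map_add' a b := by
    refine Prod.ext ?_ (Prod.ext ?_ (Prod.ext ?_ ?_)) <;>
      simp <;> push_cast <;> ring

lemma phiF_rel : ∀ v ∈ Lrel 4 (w q), phiF q v = 0 := by
  intro v hv
  have : Lrel 4 (w q) ≤ (phiF q).ker := by
    rw [Lrel, AddSubgroup.closure_le]
    rintro v ⟨i, rfl⟩
    fin_cases i <;>
      simp [AddMonoidHom.mem_ker, phiF, w, Pi.single_apply] <;>
      first | exact ⟨by decide, by ring⟩ | exact ⟨by decide, trivial⟩ | ring
  exact this hv

def phi : Lgrp 4 (w q) →+ ZMod 2 × ZMod 2 × ZMod 2 × ℤ :=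
  QuotientAddGroup.lift _ (phiF q) (phiF_rel q)

lemma phi_mk (v : (Fin 4 → ℤ) × ℤ) : phi q (QuotientAddGroup.mk v) = phiF q v := rfl






lemma gen_mem (i : Fin 4) :
    ((Pi.single i (w q i), (-1:ℤ)) : (Fin 4 → ℤ) × ℤ) ∈ Lrel 4 (w q) := by
  apply AddSubgroup.subset_closure
  exact ⟨i, rfl⟩

lemma mem_rel_of_phiF (v : (Fin 4 → ℤ) × ℤ) (h : phiF q v = 0) : v ∈ Lrel 4 (w q) := by
  obtain ⟨a, b⟩ := v
  have h0 : ((a 0 : ZMod 2)) = 0 := congrArg (fun t => t.1) h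
  have h1 : ((a 1 : ZMod 2)) = 0 := congrArg (fun t => t.2.1) h
  have h2 : ((a 2 : ZMod 2)) = 0 := congrArg (fun t => t.2.2.1) h
  have h3 : q*(a 0 + a 1 + a 2) + 2*(a 3) + 2*q*b = 0 := congrArg (fun t => t.2.2.2) h
  obtain ⟨c0, hc0⟩ := (ZMod.intCast_zmod_eq_zero_iff_dvd (a 0) 2).mp h0
  obtain ⟨c1, hc1⟩ := (ZMod.intCast_zmod_eq_zero_iff_dvd (a 1) 2).mp h1
  obtain ⟨c2, hc2⟩ := (ZMod.intCast_zmod_eq_zero_iff_dvd (a 2) 2).mp h2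
  have key : (a, b) = c0 • (Pi.single (0 : Fin 4) (w q 0), (-1 : ℤ))
      + c1 • (Pi.single (1 : Fin 4) (w q 1), (-1 : ℤ))
      + c2 • (Pi.single (2 : Fin 4) (w q 2), (-1 : ℤ))
      + (-(b + c0 + c1 + c2)) • (Pi.single (3 : Fin 4) (w q 3), (-1 : ℤ)) := by
    refine Prod.ext (funext fun j => ?_) ?_
    · rw [hc0, hc1, hc2] at h3
      push_cast at h3 hc0 hc1 hc2
      fin_cases j <;>
        simp [w, Pi.single_apply] <;> linarith
    · simp
      ring
  rw [key]
  refine add_mem (add_mem (add_mem ?_ ?_) ?_) ?_ <;>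
    exact AddSubgroup.zsmul_mem _ (gen_mem q _) _

lemma phi_eq_zero {z : Lgrp 4 (w q)} (h : phi q z = 0) : z = 0 := by
  induction z using QuotientAddGroup.induction_on with
  | H v =>
    rw [phi_mk] at h
    exact (QuotientAddGroup.eq_zero_iff v).mpr (mem_rel_of_phiF q v h)

lemma phi_inj {y z : Lgrp 4 (w q)} (h : phi q y = phi q z) : y = z := by
  have := phi_eq_zero q (z := y - z) (by rw [map_sub, h, sub_self])
  exact sub_eq_zero.mp this






lemma phi_x0 : phi q (Lx 4 (w q) 0) = (1, 0, 0, q) := by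
  rw [Lx, phi_mk]
  refine Prod.ext ?_ (Prod.ext ?_ (Prod.ext ?_ ?_)) <;>
    simp [phiF, Pi.single_apply] <;> first | decide | ring

lemma phi_x1 : phi q (Lx 4 (w q) 1) = (0, 1, 0, q) := by
  rw [Lx, phi_mk]
  refine Prod.ext ?_ (Prod.ext ?_ (Prod.ext ?_ ?_)) <;>
    simp [phiF, Pi.single_apply] <;> first | decide | ring

lemma phi_x2 : phi q (Lx 4 (w q) 2) = (0, 0, 1, q) := by
  rw [Lx, phi_mk]
  refine Prod.ext ?_ (Prod.ext ?_ (Prod.ext ?_ ?_)) <;>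
    simp [phiF, Pi.single_apply] <;> first | decide | ring

lemma phi_x3 : phi q (Lx 4 (w q) 3) = (0, 0, 0, 2) := by
  rw [Lx, phi_mk]
  refine Prod.ext ?_ (Prod.ext ?_ (Prod.ext ?_ ?_)) <;>
    simp [phiF, Pi.single_apply] <;> first | decide | ring

lemma phi_c : phi q (Lc 4 (w q)) = (0, 0, 0, 2*q) := by
  rw [Lc, phi_mk]
  refine Prod.ext ?_ (Prod.ext ?_ (Prod.ext ?_ ?_)) <;>
    simp [phiF] <;> first | decide | ring

lemma phi_s : phi q (s q) = (1, 1, 1, 3*q + 2) := by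
  rw [s, map_sum, Fin.sum_univ_four, phi_x0, phi_x1, phi_x2, phi_x3]
  refine Prod.ext ?_ (Prod.ext ?_ (Prod.ext ?_ ?_)) <;> simp <;> ring

lemma phi_smul_x3 (k : ℤ) : phi q (k • Lx 4 (w q) 3) = (0, 0, 0, 2*k) := by
  rw [map_zsmul, phi_x3]
  refine Prod.ext ?_ (Prod.ext ?_ (Prod.ext ?_ ?_)) <;> simp <;> ring

/-- description of the positive cone through `phi`. -/
lemma exists_of_mem_Lplus (hq : 2 ≤ q) {u : Lgrp 4 (w q)} (hu : u ∈ Lplus 4 (w q)) :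
    ∃ a0 a1 a2 b : ℤ, 0 ≤ a0 ∧ 0 ≤ a1 ∧ 0 ≤ a2 ∧ 0 ≤ b ∧
      phi q u = ((a0 : ZMod 2), (a1 : ZMod 2), (a2 : ZMod 2), q*(a0+a1+a2) + 2*b) := by
  induction hu using AddSubmonoid.closure_induction with
  | mem x hx =>
    rcases hx with ⟨i, rfl⟩ | hx
    · fin_cases i
      · exact ⟨1, 0, 0, 0, by norm_num, by norm_num, by norm_num, by norm_num,
          by simpa using phi_x0 q⟩
      · exact ⟨0, 1, 0, 0, by norm_num, by norm_num, by norm_num, by norm_num,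
          by simpa using phi_x1 q⟩
      · exact ⟨0, 0, 1, 0, by norm_num, by norm_num, by norm_num, by norm_num,
          by simpa using phi_x2 q⟩
      · exact ⟨0, 0, 0, 1, by norm_num, by norm_num, by norm_num, by norm_num,
          by simpa using phi_x3 q⟩
    · rw [Set.mem_singleton_iff] at hx
      subst hx
      exact ⟨0, 0, 0, q, by norm_num, by norm_num, by norm_num, by linarith,
        by rw [phi_c]; norm_num⟩
  | zero =>
    exact ⟨0, 0, 0, 0, le_refl _, le_refl _, le_refl _, le_refl _, by simp; rfl⟩
  | add x y _ _ ihx ihy =>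
    obtain ⟨a0, a1, a2, b, h0, h1, h2, hb, hx⟩ := ihx
    obtain ⟨a0', a1', a2', b', h0', h1', h2', hb', hy⟩ := ihy
    refine ⟨a0+a0', a1+a1', a2+a2', b+b', by linarith, by linarith, by linarith, by linarith, ?_⟩
    rw [map_add, hx, hy]
    refine Prod.ext ?_ (Prod.ext ?_ (Prod.ext ?_ ?_)) <;> push_cast <;> simp <;> ring

lemma zsmul_x3_mem (k : ℤ) (hk : 0 ≤ k) : k • Lx 4 (w q) 3 ∈ Lplus 4 (w q) := by
  have hx : Lx 4 (w q) 3 ∈ Lplus 4 (w q) :=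
    AddSubmonoid.subset_closure (Or.inl ⟨3, rfl⟩)
  have : k • Lx 4 (w q) 3 = k.toNat • Lx 4 (w q) 3 := by
    rw [← natCast_zsmul, Int.toNat_of_nonneg hk]
  rw [this]
  exact AddSubmonoid.nsmul_mem _ hx _






lemma dvd_of_zmod_add {a a' : ℤ} (h : (a : ZMod 2) + (a' : ZMod 2) = 0) : (2:ℤ) ∣ (a + a') := by
  have : ((a + a' : ℤ) : ZMod 2) = 0 := by push_cast; exact h
  exact (ZMod.intCast_zmod_eq_zero_iff_dvd _ 2).mp this

lemma mem_Icc_iff (hq : 2 ≤ q) (m : ℤ) (hm : 0 ≤ m) (z : Lgrp 4 (w q)) :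
    z ∈ Icc q (s q + m • Lx 4 (w q) 3) (s q + (q - 2) • Lx 4 (w q) 3) ↔
      ∃ k : ℤ, m ≤ k ∧ k ≤ q - 2 ∧ z = s q + k • Lx 4 (w q) 3 := by
  constructor
  · rintro ⟨h1, h2⟩
    rw [le] at h1 h2
    obtain ⟨a0, a1, a2, b, ha0, ha1, ha2, hb, hu⟩ := exists_of_mem_Lplus q hq h1
    obtain ⟨a0', a1', a2', b', ha0', ha1', ha2', hb', hv⟩ := exists_of_mem_Lplus q hq h2
    have hsum : phi q (z - (s q + m • Lx 4 (w q) 3))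
        + phi q ((s q + (q - 2) • Lx 4 (w q) 3) - z) = (0, 0, 0, 2*(q-2-m)) := by
      rw [← map_add]
      have hrw : (z - (s q + m • Lx 4 (w q) 3)) + ((s q + (q - 2) • Lx 4 (w q) 3) - z)
          = (q - 2 - m) • Lx 4 (w q) 3 := by module
      rw [hrw, phi_smul_x3]
    rw [hu, hv] at hsum
    simp only [Prod.mk_add_mk, Prod.mk.injEq] at hsum
    obtain ⟨e0, e1, e2, e3⟩ := hsum
    have d0 := dvd_of_zmod_add e0
    have d1 := dvd_of_zmod_add e1
    have d2 := dvd_of_zmod_add e2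
    by_cases hA : Even a0 ∧ Even a1 ∧ Even a2
    · obtain ⟨⟨α0, hα0⟩, ⟨α1, hα1⟩, ⟨α2, hα2⟩⟩ := hA
      refine ⟨m + (q * (α0 + α1 + α2) + b), by nlinarith, by nlinarith, ?_⟩
      have hz0 : phi q (z - (s q + (m + (q * (α0 + α1 + α2) + b)) • Lx 4 (w q) 3)) = 0 := by
        have hrw : z - (s q + (m + (q * (α0 + α1 + α2) + b)) • Lx 4 (w q) 3)
            = (z - (s q + m • Lx 4 (w q) 3)) - (q * (α0 + α1 + α2) + b) • Lx 4 (w q) 3 := by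
          module
        rw [hrw, map_sub, hu, phi_smul_x3]
        have z0 : (a0 : ZMod 2) = 0 :=
          (ZMod.intCast_zmod_eq_zero_iff_dvd a0 2).mpr ⟨α0, by push_cast; linarith⟩
        have z1 : (a1 : ZMod 2) = 0 :=
          (ZMod.intCast_zmod_eq_zero_iff_dvd a1 2).mpr ⟨α1, by push_cast; linarith⟩
        have z2 : (a2 : ZMod 2) = 0 :=
          (ZMod.intCast_zmod_eq_zero_iff_dvd a2 2).mpr ⟨α2, by push_cast; linarith⟩
        refine Prod.ext ?_ (Prod.ext ?_ (Prod.ext ?_ ?_)) <;>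
          simp [z0, z1, z2]
        nlinarith
      have := phi_eq_zero q hz0
      rw [sub_eq_zero] at this
      exact this
    · exfalso
      have hodd : ¬ Even a0 ∨ ¬ Even a1 ∨ ¬ Even a2 := by tauto
      have hS : 1 ≤ a0 + a1 + a2 ∧ 1 ≤ a0' + a1' + a2' := by
        rcases hodd with h | h | h <;> rw [Int.even_iff] at h <;> constructor <;> omega
      have t1 : q * 1 ≤ q * (a0 + a1 + a2) :=
        mul_le_mul_of_nonneg_left hS.1 (by linarith)
      have t2 : q * 1 ≤ q * (a0' + a1' + a2') :=
        mul_le_mul_of_nonneg_left hS.2 (by linarith)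
      linarith
  · rintro ⟨k, hk1, hk2, rfl⟩
    constructor
    · rw [le]
      have hrw : (s q + k • Lx 4 (w q) 3) - (s q + m • Lx 4 (w q) 3)
          = (k - m) • Lx 4 (w q) 3 := by module
      rw [hrw]
      exact zsmul_x3_mem q _ (by linarith)
    · rw [le]
      have hrw : (s q + (q - 2) • Lx 4 (w q) 3) - (s q + k • Lx 4 (w q) 3)
          = (q - 2 - k) • Lx 4 (w q) 3 := by module
      rw [hrw]
      exact zsmul_x3_mem q _ (by linarith)

lemma mem_I_iff (hq : 2 ≤ q) (z : Lgrp 4 (w q)) :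
    z ∈ Icc q (s q) (s q + (q - 2) • Lx 4 (w q) 3) ↔
      ∃ k : ℤ, 0 ≤ k ∧ k ≤ q - 2 ∧ z = s q + k • Lx 4 (w q) 3 := by
  have := mem_Icc_iff q hq 0 le_rfl z
  simpa using this






/-- For weights `(2,2,2,q)`, the upsets restricted to `[s, s+(q−2)x_4]` are exactly
`∅` and the intervals `[s + m x_4, s + (q−2) x_4]` for `0 ≤ m ≤ q−2`. -/
theorem upsets_of_interval (hq : 2 ≤ q) (J : Set (Lgrp 4 (w q))) :
    IsUpsetIn q (Icc q (s q) (s q + (q - 2) • Lx 4 (w q) 3)) J ↔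
      (J = ∅ ∨ ∃ m : ℤ, 0 ≤ m ∧ m ≤ q - 2 ∧
        J = Icc q (s q + m • Lx 4 (w q) 3) (s q + (q - 2) • Lx 4 (w q) 3)) := by
  constructor
  · rintro ⟨hJI, hup⟩
    by_cases hJ : J = ∅
    · exact Or.inl hJ
    right
    obtain ⟨z0, hz0⟩ := Set.nonempty_iff_ne_empty.mpr hJ
    have hinh : ∃ k : ℤ, (0 ≤ k ∧ k ≤ q - 2) ∧ s q + k • Lx 4 (w q) 3 ∈ J := by
      obtain ⟨k, hk0, hk2, hzk⟩ := (mem_I_iff q hq z0).mp (hJI hz0)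
      exact ⟨k, ⟨hk0, hk2⟩, hzk ▸ hz0⟩
    obtain ⟨m, hmP, hmin⟩ := Int.exists_least_of_bdd ⟨0, fun z hz => hz.1.1⟩ hinh
    refine ⟨m, hmP.1.1, hmP.1.2, ?_⟩
    apply Set.eq_of_subset_of_subset
    · intro z hz
      obtain ⟨k, hk0, hk2, rfl⟩ := (mem_I_iff q hq z).mp (hJI hz)
      have hmk : m ≤ k := hmin k ⟨⟨hk0, hk2⟩, hz⟩
      exact (mem_Icc_iff q hq m hmP.1.1 _).mpr ⟨k, hmk, hk2, rfl⟩
    · intro z hz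
      obtain ⟨k, hmk, hk2, rfl⟩ := (mem_Icc_iff q hq m hmP.1.1 z).mp hz
      have hbase : s q + m • Lx 4 (w q) 3 ∈ J := hmP.2
      have hdiff : (k - m) • Lx 4 (w q) 3 ∈ Lplus 4 (w q) :=
        zsmul_x3_mem q _ (by linarith)
      have heq : s q + k • Lx 4 (w q) 3
          = (s q + m • Lx 4 (w q) 3) + (k - m) • Lx 4 (w q) 3 := by module
      rw [heq]
      refine hup _ hbase _ hdiff ?_
      rw [← heq]
      exact (mem_I_iff q hq _).mpr ⟨k, by linarith [hmP.1.1], hk2, rfl⟩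
  · rintro (rfl | ⟨m, hm0, hm2, rfl⟩)
    · exact ⟨Set.empty_subset _, fun a ha => absurd ha (Set.notMem_empty a)⟩
    constructor
    · intro z hz
      obtain ⟨k, hmk, hk2, rfl⟩ := (mem_Icc_iff q hq m hm0 z).mp hz
      exact (mem_I_iff q hq _).mpr ⟨k, by linarith, hk2, rfl⟩
    · intro a ha u hu hau
      obtain ⟨k, hmk, hk2, rfl⟩ := (mem_Icc_iff q hq m hm0 a).mp ha
      obtain ⟨k', hk0', hk2', he⟩ := (mem_I_iff q hq _).mp hau
      have hphiu : phi q u = (0, 0, 0, 2*(k' - k)) := by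
        have h2 : u = (s q + k' • Lx 4 (w q) 3) - (s q + k • Lx 4 (w q) 3) := by
          rw [← he]; abel
        have h3 : (s q + k' • Lx 4 (w q) 3) - (s q + k • Lx 4 (w q) 3)
            = (k' - k) • Lx 4 (w q) 3 := by module
        rw [h2, h3, phi_smul_x3]
      obtain ⟨a0, a1, a2, b, ha0, ha1, ha2, hb, hu'⟩ := exists_of_mem_Lplus q hq hu
      have e4 : q * (a0 + a1 + a2) + 2 * b = 2 * (k' - k) := by
        have := hu'.symm.trans hphiu
        exact congrArg (fun t => t.2.2.2) this
      have hkk : k ≤ k' := by nlinarith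
      exact (mem_Icc_iff q hq m hm0 _).mpr ⟨k', by linarith, hk2', he⟩

end Stmt7
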